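/- Let d ≥ 1, let f ∈ F(L,m) with unique minimizer x*, and let L̄ ≥ L with κ̄ = L̄/m > 1. Let x_t, y_t ∈ ℝ^d be arbitrary, set y_{t+1} = x_t − (1/L̄)∇f(x_t), and let x_{t+1} ∈ ℝ^d be arbitrary. Then (1 + δ^GD) U(x_{t+1}, y_{t+1}) − U(x_t, y_t) ≤ L̄ ⟨x_t − y_t, x_t − x*⟩ − (L̄/2)‖x_t − y_t‖², where δ^GD = 1/(κ̄ − 1). -/

import Mathlib

open scoped RealInnerProductSpace

/-- The auxiliary function `U(x, y) = f(y) − f(x*) + (L̄/2)‖y − x*‖²`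
(it depends only on `y`). -/
noncomputable def lyapU {d : ℕ} (f : EuclideanSpace ℝ (Fin d) → ℝ)
    (xstar : EuclideanSpace ℝ (Fin d)) (Lbar : ℝ)
    (_x y : EuclideanSpace ℝ (Fin d)) : ℝ :=
  f y - f xstar + Lbar / 2 * ‖y - xstar‖ ^ 2

/-!
A gradient step of length `1/L̄` decreases `f` by at least `‖∇f(x)‖²/(2L̄)`, which exactly
cancels the `‖∇f(x)‖²` term in the expansion of `(L̄/2)‖y₊ − x*‖²`; strong convexity at `x`
then bounds `U(y₊)` by `((L̄ − m)/2)‖x − x*‖²`. Since `1 + δ^GD = L̄/(L̄ − m)`, the left-hand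
side is at most `(L̄/2)(‖x − x*‖² − ‖y − x*‖²)`, which is the right-hand side by polarization.
-/

section GradientStep

variable {E : Type*} [NormedAddCommGroup E] [InnerProductSpace ℝ E]

theorem norm_sub_sq_sub_norm_sub_sq (x y z : E) :
    ‖x - z‖ ^ 2 - ‖y - z‖ ^ 2 = 2 * ⟪x - y, x - z⟫ - ‖x - y‖ ^ 2 := by
  rw [show y - z = (x - z) - (x - y) by abel, norm_sub_sq_real (x - z), real_inner_comm]
  ring

theorem apply_gradient_step_le {f : E → ℝ} {x g : E} {L Lbar : ℝ} (hLbar : 0 < Lbar)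
    (hL : L ≤ Lbar) (hsmooth : ∀ y, f y ≤ f x + ⟪g, y - x⟫ + L / 2 * ‖y - x‖ ^ 2) :
    f (x - (1 / Lbar) • g) ≤ f x - 1 / (2 * Lbar) * ‖g‖ ^ 2 := by
  have hstep := hsmooth (x - (1 / Lbar) • g)
  rw [sub_sub_cancel_left, inner_neg_right, real_inner_smul_right, real_inner_self_eq_norm_sq,
    norm_neg, norm_smul, Real.norm_of_nonneg (by positivity)] at hstep
  have hcoef : L / 2 * (1 / Lbar * ‖g‖) ^ 2 ≤ Lbar / 2 * (1 / Lbar * ‖g‖) ^ 2 := by gcongr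
  calc f (x - (1 / Lbar) • g)
      ≤ f x + -(1 / Lbar * ‖g‖ ^ 2) + Lbar / 2 * (1 / Lbar * ‖g‖) ^ 2 := by linarith
    _ = f x - 1 / (2 * Lbar) * ‖g‖ ^ 2 := by field_simp; ring

theorem lyap_gradient_step_le {f : E → ℝ} {x g z : E} {L m Lbar : ℝ} (hLbar : 0 < Lbar)
    (hL : L ≤ Lbar) (hsmooth : ∀ y, f y ≤ f x + ⟪g, y - x⟫ + L / 2 * ‖y - x‖ ^ 2)
    (hstrong : f x + ⟪g, z - x⟫ + m / 2 * ‖z - x‖ ^ 2 ≤ f z) :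
    f (x - (1 / Lbar) • g) - f z + Lbar / 2 * ‖x - (1 / Lbar) • g - z‖ ^ 2
      ≤ (Lbar - m) / 2 * ‖x - z‖ ^ 2 := by
  have hdescent := apply_gradient_step_le hLbar hL hsmooth
  have hexpand : Lbar / 2 * ‖x - (1 / Lbar) • g - z‖ ^ 2
      = Lbar / 2 * ‖x - z‖ ^ 2 - ⟪g, x - z⟫ + 1 / (2 * Lbar) * ‖g‖ ^ 2 := by
    rw [show x - (1 / Lbar) • g - z = (x - z) - (1 / Lbar) • g by abel, norm_sub_sq_real,
      real_inner_smul_right, norm_smul, Real.norm_of_nonneg (by positivity), real_inner_comm]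
    field_simp
  rw [show z - x = -(x - z) by abel, inner_neg_right, norm_neg] at hstrong
  linarith

end GradientStep

theorem stmt4_general
    {d : ℕ}
    {L m : ℝ} (hm : 0 < m)
    (f : EuclideanSpace ℝ (Fin d) → ℝ)
    (hsmooth : ∀ x y : EuclideanSpace ℝ (Fin d),
      f y ≤ f x + ⟪gradient f x, y - x⟫ + L / 2 * ‖y - x‖ ^ 2)
    (hstrong : ∀ x y : EuclideanSpace ℝ (Fin d),
      f x + ⟪gradient f x, y - x⟫ + m / 2 * ‖y - x‖ ^ 2 ≤ f y)
    (xstar : EuclideanSpace ℝ (Fin d)) (hmin : ∀ z, f xstar ≤ f z)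
    {Lbar : ℝ} (hLbarL : L ≤ Lbar) (hkappa : 1 < Lbar / m)
    (xt yt : EuclideanSpace ℝ (Fin d))
    (y1 : EuclideanSpace ℝ (Fin d)) (hy1 : y1 = xt - (1 / Lbar) • gradient f xt)
    (x1 : EuclideanSpace ℝ (Fin d)) :
    (1 + 1 / (Lbar / m - 1)) * lyapU f xstar Lbar x1 y1 - lyapU f xstar Lbar xt yt
      ≤ Lbar * ⟪xt - yt, xt - xstar⟫ - Lbar / 2 * ‖xt - yt‖ ^ 2 := by
  have hmLbar : m < Lbar := (one_lt_div hm).mp hkappa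
  have hLbar : 0 < Lbar := hm.trans hmLbar
  have hnext : lyapU f xstar Lbar x1 y1 ≤ (Lbar - m) / 2 * ‖xt - xstar‖ ^ 2 := by
    rw [lyapU, hy1]
    exact lyap_gradient_step_le hLbar hLbarL (hsmooth xt) (hstrong xt xstar)
  have hcurr : Lbar / 2 * ‖yt - xstar‖ ^ 2 ≤ lyapU f xstar Lbar xt yt := by
    rw [lyapU]
    linarith [hmin yt]
  have hgap : 0 < Lbar - m := sub_pos.mpr hmLbar
  have hrate : 1 + 1 / (Lbar / m - 1) = Lbar / (Lbar - m) := by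
    field_simp [hgap.ne']
    ring
  calc (1 + 1 / (Lbar / m - 1)) * lyapU f xstar Lbar x1 y1 - lyapU f xstar Lbar xt yt
      ≤ Lbar / (Lbar - m) * ((Lbar - m) / 2 * ‖xt - xstar‖ ^ 2)
          - Lbar / 2 * ‖yt - xstar‖ ^ 2 := by
        rw [hrate]
        gcongr
    _ = Lbar / 2 * (‖xt - xstar‖ ^ 2 - ‖yt - xstar‖ ^ 2) := by
        field_simp
    _ = Lbar * ⟪xt - yt, xt - xstar⟫ - Lbar / 2 * ‖xt - yt‖ ^ 2 := by
        rw [norm_sub_sq_sub_norm_sub_sq]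
        ring

/-- Descent of the auxiliary function `U` along one gradient
step: for arbitrary `x_t, y_t` and `y_{t+1} = x_t − (1/L̄)∇f(x_t)` (and
arbitrary `x_{t+1}`),
`(1 + δ^GD) U(x_{t+1}, y_{t+1}) − U(x_t, y_t)
  ≤ L̄⟨x_t − y_t, x_t − x*⟩ − (L̄/2)‖x_t − y_t‖²`, where `δ^GD = 1/(κ̄ − 1)`. -/
theorem stmt4
    {d : ℕ} (hd : 1 ≤ d)
    {L m : ℝ} (hm : 0 < m) (hmL : m ≤ L)
    (f : EuclideanSpace ℝ (Fin d) → ℝ)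
    (hdiff : Differentiable ℝ f)
    (hsmooth : ∀ x y : EuclideanSpace ℝ (Fin d),
      f y ≤ f x + ⟪gradient f x, y - x⟫ + L / 2 * ‖y - x‖ ^ 2)
    (hstrong : ∀ x y : EuclideanSpace ℝ (Fin d),
      f x + ⟪gradient f x, y - x⟫ + m / 2 * ‖y - x‖ ^ 2 ≤ f y)
    (xstar : EuclideanSpace ℝ (Fin d)) (hmin : ∀ z, f xstar ≤ f z)
    {Lbar : ℝ} (hLbarL : L ≤ Lbar) (hkappa : 1 < Lbar / m)
    (xt yt : EuclideanSpace ℝ (Fin d))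
    (y1 : EuclideanSpace ℝ (Fin d)) (hy1 : y1 = xt - (1 / Lbar) • gradient f xt)
    (x1 : EuclideanSpace ℝ (Fin d)) :
    (1 + 1 / (Lbar / m - 1)) * lyapU f xstar Lbar x1 y1 - lyapU f xstar Lbar xt yt
      ≤ Lbar * ⟪xt - yt, xt - xstar⟫ - Lbar / 2 * ‖xt - yt‖ ^ 2 :=
  stmt4_general hm f hsmooth hstrong xstar hmin hLbarL hkappa xt yt y1 hy1 x1
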